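/- arXiv:2512.24935 — 6 statements merged into one kernel-verified Lean document; each statement's English description precedes it below -/
import Mathlib

section
/- The operator D is self-adjoint with respect to the pairing ⟨f,g⟩ = ∫_E f g dμ×: for all locally constant functions f, g : E → ℝ, the integrals defining (Df)(x) and (Dg)(x) converge absolutely for every x ∈ E, and ∫_E (Df)(x) g(x) dμ×(x) = ∫_E f(x) (Dg)(x) dμ×(x), both integrals being finite. -/
/-!
A locally constant function on the compact set `E` is constant on all balls of some uniform
radius `δ`, so the numerator `f z - f x` vanishes whenever `|z - x| ≤ δ`: the kernels of `D` are
bounded on `E × E`, which gives all the integrability. The factor `|x|` in `D` cancels the density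
of `μ×`, so both sides become `μ⁺`-integrals, and their difference is the integral over `E × E` of
`(f z g x - f x g z) / |z - x|²`, which is antisymmetric in `(x, z)` and hence integrates to zero.
-/

open MeasureTheory

noncomputable section

/-- The fundamental domain `E = ⋃_{s=0}^{m-1} p^s ℤ_p^×` of the Tate curve
`ℚ_p^×/p^{mℤ}`, described as the set of `x` with `p^{-(m-1)} ≤ |x| ≤ 1`
(such an `x` is automatically nonzero). -/
def Efund (p m : ℕ) [Fact p.Prime] : Set ℚ_[p] :=
  {x | (p : ℝ) ^ (1 - (m : ℤ)) ≤ ‖x‖ ∧ ‖x‖ ≤ 1}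

/-- The operator `(Dφ)(x) = |x| ∫_E (φ(z) − φ(x))/|z − x|² dμ⁺(z)`. -/
def Dop (p m : ℕ) [Fact p.Prime] [MeasurableSpace ℚ_[p]]
    (μ : Measure ℚ_[p]) (φ : ℚ_[p] → ℝ) (x : ℚ_[p]) : ℝ :=
  ‖x‖ * ∫ z in Efund p m, (φ z - φ x) / ‖z - x‖ ^ 2 ∂μ

/-- The multiplicative measure `dμ× = dμ⁺/|x|`. -/
def mulMeasure (p : ℕ) [Fact p.Prime] [MeasurableSpace ℚ_[p]]
    (μ : Measure ℚ_[p]) : Measure ℚ_[p] :=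
  μ.withDensity fun x => ENNReal.ofReal (1 / ‖x‖)

/-- `f` is locally constant on `E`: every point of `E` has a neighborhood in `E`
on which `f` is constant. -/
def LocConstOn (p m : ℕ) [Fact p.Prime] (f : ℚ_[p] → ℝ) : Prop :=
  ∀ x ∈ Efund p m, ∃ n : ℕ,
    ∀ y ∈ Efund p m, ‖y - x‖ ≤ (p : ℝ) ^ (-(n : ℤ)) → f y = f x

open Metric Set

section SymmetricKernel

variable {α : Type*} [MeasurableSpace α] {ν : Measure α} [SFinite ν]

theorem integral_prod_eq_zero_of_antisymm {H : α → α → ℝ} (hH : ∀ x z, H z x = -H x z) :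
    ∫ q, H q.1 q.2 ∂ν.prod ν = 0 := by
  have hswap : ∫ q, H q.1 q.2 ∂ν.prod ν = -∫ q, H q.1 q.2 ∂ν.prod ν := by
    rw [← integral_neg, ← integral_prod_swap]
    exact integral_congr_ae (.of_forall fun q => hH q.1 q.2)
  linarith

def diffOp (ν : Measure α) (d : α → α → ℝ) (φ : α → ℝ) (x : α) : ℝ :=
  ∫ z, (φ z - φ x) / d x z ∂ν

theorem integrable_diffOp {d : α → α → ℝ} {f : α → ℝ}
    (hF : Integrable (fun q : α × α => (f q.2 - f q.1) / d q.1 q.2) (ν.prod ν)) :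
    Integrable (diffOp ν d f) ν :=
  hF.integral_prod_left

theorem integral_diffOp_mul_eq_integral_mul_diffOp {d : α → α → ℝ}
    (hd : ∀ x z, d z x = d x z) {f g : α → ℝ} {Cf Cg : ℝ}
    (hfm : AEStronglyMeasurable f ν) (hgm : AEStronglyMeasurable g ν)
    (hfb : ∀ᵐ x ∂ν, ‖f x‖ ≤ Cf) (hgb : ∀ᵐ x ∂ν, ‖g x‖ ≤ Cg)
    (hF : Integrable (fun q : α × α => (f q.2 - f q.1) / d q.1 q.2) (ν.prod ν))
    (hG : Integrable (fun q : α × α => (g q.2 - g q.1) / d q.1 q.2) (ν.prod ν)) :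
    ∫ x, diffOp ν d f x * g x ∂ν = ∫ x, f x * diffOp ν d g x ∂ν := by
  set H : α → α → ℝ := fun x z => (f z - f x) / d x z * g x - f x * ((g z - g x) / d x z)
  have hH : Integrable (Function.uncurry H) (ν.prod ν) :=
    (hF.mul_bdd hgm.comp_fst (Measure.quasiMeasurePreserving_fst.ae hgb)).sub
      (hG.bdd_mul hfm.comp_fst (Measure.quasiMeasurePreserving_fst.ae hfb))
  have hanti : ∀ x z, H z x = -H x z := fun x z => by
    simp only [H, hd x z]
    ring
  have hinner : ∀ᵐ x ∂ν, diffOp ν d f x * g x - f x * diffOp ν d g x = ∫ z, H x z ∂ν := by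
    filter_upwards [hF.prod_right_ae, hG.prod_right_ae] with x hFx hGx
    rw [diffOp, diffOp, integral_sub (hFx.mul_const _) (hGx.const_mul _), integral_mul_const,
      integral_const_mul]
  rw [← sub_eq_zero, ← integral_sub ((integrable_diffOp hF).mul_bdd hgm hgb)
    ((integrable_diffOp hG).bdd_mul hfm hfb), integral_congr_ae hinner, integral_integral hH]
  exact integral_prod_eq_zero_of_antisymm hanti

end SymmetricKernel

section UniformlyLocallyConst

variable {α β : Type*} [PseudoMetricSpace α] {f : α → β} {s : Set α} {δ : ℝ}

def UniformlyLocallyConstOn (f : α → β) (s : Set α) (δ : ℝ) : Prop :=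
  ∀ x ∈ s, ∀ y ∈ s, dist y x ≤ δ → f y = f x

/-- The uniform radius is half a Lebesgue number of the cover of `s` by the balls on which
`f` is constant. -/
theorem IsCompact.exists_uniformlyLocallyConstOn (hs : IsCompact s)
    (hf : ∀ x ∈ s, ∃ ε > 0, ∀ y ∈ s, dist y x ≤ ε → f y = f x) :
    ∃ δ > 0, UniformlyLocallyConstOn f s δ := by
  choose ε hε hfε using hf
  obtain ⟨δ, hδ, hcover⟩ := lebesgue_number_lemma_of_metric hs
    (c := fun i : s => ball (i : α) (ε i i.2)) (fun _ => isOpen_ball)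
    (fun x hx => mem_iUnion.2 ⟨⟨x, hx⟩, mem_ball_self (hε x hx)⟩)
  refine ⟨δ / 2, half_pos hδ, fun x hx y hy hxy => ?_⟩
  obtain ⟨i, hi⟩ := hcover x hx
  have hxi := hi (mem_ball_self hδ)
  have hyi := hi (mem_ball.2 (hxy.trans_lt (half_lt_self hδ)))
  rw [hfε i i.2 y hy (mem_ball.1 hyi).le, hfε i i.2 x hx (mem_ball.1 hxi).le]

theorem UniformlyLocallyConstOn.continuousOn [TopologicalSpace β]
    (hf : UniformlyLocallyConstOn f s δ) (hδ : 0 < δ) : ContinuousOn f s := fun x hx =>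
  continuousWithinAt_const.congr_of_eventuallyEq (Filter.mem_of_superset
    (inter_mem_nhdsWithin s (closedBall_mem_nhds x hδ)) fun y hy => hf x hx y hy.1 hy.2) rfl

end UniformlyLocallyConst

section DifferenceQuotient

variable {α : Type*} [NormedAddCommGroup α] {f : α → ℝ} {s : Set α} {δ M : ℝ}

theorem UniformlyLocallyConstOn.norm_sub_div_norm_sq_le (hf : UniformlyLocallyConstOn f s δ)
    (hδ : 0 < δ) (hM : ∀ x ∈ s, ‖f x‖ ≤ M) {x z : α} (hx : x ∈ s) (hz : z ∈ s) :
    ‖(f z - f x) / ‖z - x‖ ^ 2‖ ≤ 2 * M / δ ^ 2 := by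
  have hM₀ : 0 ≤ M := (norm_nonneg _).trans (hM x hx)
  rcases le_or_gt ‖z - x‖ δ with hzx | hzx
  · rw [hf x hx z hz (dist_eq_norm z x ▸ hzx), sub_self, zero_div, norm_zero]
    positivity
  · rw [norm_div, norm_pow, norm_norm]
    exact div_le_div₀ (by positivity) ((norm_sub_le _ _).trans (by linarith [hM z hz, hM x hx]))
      (by positivity) (pow_le_pow_left₀ hδ.le hzx.le 2)

variable [MeasurableSpace α] [BorelSpace α] {μ : Measure α}

theorem IsCompact.exists_ae_restrict_norm_le (hs : IsCompact s) (hf : ContinuousOn f s) :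
    ∃ C, ∀ᵐ x ∂μ.restrict s, ‖f x‖ ≤ C :=
  let ⟨C, hC⟩ := hs.exists_bound_of_continuousOn hf
  ⟨C, (ae_restrict_iff' hs.measurableSet).2 (.of_forall hC)⟩

variable [IsFiniteMeasureOnCompacts μ]

theorem UniformlyLocallyConstOn.integrableOn_sub_div_norm_sq (hs : IsCompact s)
    (hf : UniformlyLocallyConstOn f s δ) (hδ : 0 < δ) {x : α} (hx : x ∈ s) :
    IntegrableOn (fun z => (f z - f x) / ‖z - x‖ ^ 2) s μ := by
  obtain ⟨M, hM⟩ := hs.exists_bound_of_continuousOn (hf.continuousOn hδ)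
  have : IsFiniteMeasure (μ.restrict s) := isFiniteMeasure_restrict.2 hs.measure_lt_top.ne
  have hfm := (hf.continuousOn hδ).aestronglyMeasurable (μ := μ) hs.measurableSet
  refine Integrable.mono' (integrable_const (2 * M / δ ^ 2))
    ((hfm.sub aestronglyMeasurable_const).aemeasurable.div (by fun_prop)).aestronglyMeasurable
    ((ae_restrict_iff' hs.measurableSet).2
      (.of_forall fun z hz => hf.norm_sub_div_norm_sq_le hδ hM hx hz))

theorem UniformlyLocallyConstOn.integrable_prod_sub_div_norm_sq [SecondCountableTopology α]
    (hs : IsCompact s) (hf : UniformlyLocallyConstOn f s δ) (hδ : 0 < δ) :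
    Integrable (fun q : α × α => (f q.2 - f q.1) / ‖q.2 - q.1‖ ^ 2)
      ((μ.restrict s).prod (μ.restrict s)) := by
  obtain ⟨M, hM⟩ := hs.exists_bound_of_continuousOn (hf.continuousOn hδ)
  have : IsFiniteMeasure (μ.restrict s) := isFiniteMeasure_restrict.2 hs.measure_lt_top.ne
  have hfm := (hf.continuousOn hδ).aestronglyMeasurable (μ := μ) hs.measurableSet
  refine Integrable.mono' (integrable_const (2 * M / δ ^ 2))
    ((hfm.comp_snd.sub hfm.comp_fst).aemeasurable.div (by fun_prop)).aestronglyMeasurable ?_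
  filter_upwards [Measure.quasiMeasurePreserving_fst.ae (ae_restrict_mem hs.measurableSet),
    Measure.quasiMeasurePreserving_snd.ae (ae_restrict_mem hs.measurableSet)] with q hq₁ hq₂
  exact hf.norm_sub_div_norm_sq_le hδ hM hq₁ hq₂

end DifferenceQuotient

section Padic

variable {p m : ℕ} [Fact p.Prime]

theorem isCompact_Efund : IsCompact (Efund p m) :=
  (isCompact_closedBall (0 : ℚ_[p]) 1).of_isClosed_subset
    ((isClosed_le continuous_const continuous_norm).inter
      (isClosed_le continuous_norm continuous_const))
    fun _ hx => mem_closedBall_zero_iff.2 hx.2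

theorem ne_zero_of_mem_Efund {x : ℚ_[p]} (hx : x ∈ Efund p m) : x ≠ 0 :=
  norm_pos_iff.1 ((zpow_pos (Nat.cast_pos.2 (Fact.out : p.Prime).pos) _).trans_le hx.1)

theorem LocConstOn.exists_uniformlyLocallyConstOn {f : ℚ_[p] → ℝ} (hf : LocConstOn p m f) :
    ∃ δ > 0, UniformlyLocallyConstOn f (Efund p m) δ :=
  isCompact_Efund.exists_uniformlyLocallyConstOn fun x hx =>
    let ⟨_, hn⟩ := hf x hx
    ⟨_, zpow_pos (Nat.cast_pos.2 (Fact.out : p.Prime).pos) _,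
      fun y hy hxy => hn y hy (dist_eq_norm y x ▸ hxy)⟩

variable [MeasurableSpace ℚ_[p]] {μ : Measure ℚ_[p]} {s : Set ℚ_[p]}

theorem ae_restrict_density_smul_norm_mul_eq (hs : MeasurableSet s) (hs₀ : ∀ x ∈ s, x ≠ 0)
    (h : ℚ_[p] → ℝ) :
    ∀ᵐ x ∂μ.restrict s, (ENNReal.ofReal (1 / ‖x‖)).toReal • (‖x‖ * h x) = h x :=
  (ae_restrict_iff' hs).2 <| .of_forall fun x hx => by
    rw [ENNReal.toReal_ofReal (by positivity), smul_eq_mul, ← mul_assoc,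
      one_div_mul_cancel (norm_ne_zero_iff.2 (hs₀ x hx)), one_mul]

variable [BorelSpace ℚ_[p]]

theorem integrableOn_mulMeasure_norm_mul_iff (hs : MeasurableSet s) (hs₀ : ∀ x ∈ s, x ≠ 0)
    {h : ℚ_[p] → ℝ} :
    IntegrableOn (fun x => ‖x‖ * h x) s (mulMeasure p μ) ↔ IntegrableOn h s μ := by
  rw [IntegrableOn, mulMeasure, restrict_withDensity hs,
    integrable_withDensity_iff_integrable_smul' (by fun_prop)
      (.of_forall fun _ => ENNReal.ofReal_lt_top)]
  exact integrable_congr (ae_restrict_density_smul_norm_mul_eq hs hs₀ h)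

theorem setIntegral_mulMeasure_norm_mul (hs : MeasurableSet s) (hs₀ : ∀ x ∈ s, x ≠ 0)
    (h : ℚ_[p] → ℝ) :
    ∫ x in s, ‖x‖ * h x ∂mulMeasure p μ = ∫ x in s, h x ∂μ := by
  rw [mulMeasure, restrict_withDensity hs, integral_withDensity_eq_integral_toReal_smul
    (by fun_prop) (.of_forall fun _ => ENNReal.ofReal_lt_top)]
  exact integral_congr_ae (ae_restrict_density_smul_norm_mul_eq hs hs₀ h)

end Padic

theorem Dop_selfAdjoint_general (p m : ℕ) [Fact p.Prime]
    [MeasurableSpace ℚ_[p]] [BorelSpace ℚ_[p]]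
    (μ : Measure ℚ_[p]) [μ.IsAddHaarMeasure]
    (f g : ℚ_[p] → ℝ) (hf : LocConstOn p m f) (hg : LocConstOn p m g) :
    (∀ x ∈ Efund p m,
      IntegrableOn (fun z => (f z - f x) / ‖z - x‖ ^ 2) (Efund p m) μ) ∧
    (∀ x ∈ Efund p m,
      IntegrableOn (fun z => (g z - g x) / ‖z - x‖ ^ 2) (Efund p m) μ) ∧
    IntegrableOn (fun x => Dop p m μ f x * g x) (Efund p m) (mulMeasure p μ) ∧
    IntegrableOn (fun x => f x * Dop p m μ g x) (Efund p m) (mulMeasure p μ) ∧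
    ∫ x in Efund p m, Dop p m μ f x * g x ∂(mulMeasure p μ) =
      ∫ x in Efund p m, f x * Dop p m μ g x ∂(mulMeasure p μ) := by
  have hE : IsCompact (Efund p m) := isCompact_Efund
  obtain ⟨δf, hδf, hf⟩ := hf.exists_uniformlyLocallyConstOn
  obtain ⟨δg, hδg, hg⟩ := hg.exists_uniformlyLocallyConstOn
  have hfm := (hf.continuousOn hδf).aestronglyMeasurable (μ := μ) hE.measurableSet
  have hgm := (hg.continuousOn hδg).aestronglyMeasurable (μ := μ) hE.measurableSet
  obtain ⟨Cf, hCf⟩ := hE.exists_ae_restrict_norm_le (μ := μ) (hf.continuousOn hδf)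
  obtain ⟨Cg, hCg⟩ := hE.exists_ae_restrict_norm_le (μ := μ) (hg.continuousOn hδg)
  have hF := hf.integrable_prod_sub_div_norm_sq (μ := μ) hE hδf
  have hG := hg.integrable_prod_sub_div_norm_sq (μ := μ) hE hδg
  simp only [Dop, mul_assoc, mul_left_comm (f _) ‖_‖,
    integrableOn_mulMeasure_norm_mul_iff hE.measurableSet fun _ => ne_zero_of_mem_Efund,
    setIntegral_mulMeasure_norm_mul hE.measurableSet fun _ => ne_zero_of_mem_Efund]
  exact ⟨fun x hx => hf.integrableOn_sub_div_norm_sq hE hδf hx,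
    fun x hx => hg.integrableOn_sub_div_norm_sq hE hδg hx,
    (integrable_diffOp hF).mul_bdd hgm hCg, (integrable_diffOp hG).bdd_mul hfm hCf,
    integral_diffOp_mul_eq_integral_mul_diffOp (fun x z => by rw [norm_sub_rev])
      hfm hgm hCf hCg hF hG⟩

/-- The operator `D` is self-adjoint with respect to the pairing
`⟨f,g⟩ = ∫_E f g dμ×`: for all locally constant `f, g : E → ℝ`, the integrals defining
`(Df)(x)` and `(Dg)(x)` converge absolutely for every `x ∈ E`, and
`∫_E (Df) g dμ× = ∫_E f (Dg) dμ×`, both integrals being finite. -/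
theorem Dop_selfAdjoint (p m : ℕ) [Fact p.Prime] (hm : 1 ≤ m)
    [MeasurableSpace ℚ_[p]] [BorelSpace ℚ_[p]]
    (μ : Measure ℚ_[p]) [μ.IsAddHaarMeasure]
    (hμ : μ (Metric.closedBall 0 1) = 1)
    (f g : ℚ_[p] → ℝ) (hf : LocConstOn p m f) (hg : LocConstOn p m g) :
    (∀ x ∈ Efund p m,
      IntegrableOn (fun z => (f z - f x) / ‖z - x‖ ^ 2) (Efund p m) μ) ∧
    (∀ x ∈ Efund p m,
      IntegrableOn (fun z => (g z - g x) / ‖z - x‖ ^ 2) (Efund p m) μ) ∧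
    IntegrableOn (fun x => Dop p m μ f x * g x) (Efund p m) (mulMeasure p μ) ∧
    IntegrableOn (fun x => f x * Dop p m μ g x) (Efund p m) (mulMeasure p μ) ∧
    ∫ x in Efund p m, Dop p m μ f x * g x ∂(mulMeasure p μ) =
      ∫ x in Efund p m, f x * Dop p m μ g x ∂(mulMeasure p μ) :=
  Dop_selfAdjoint_general p m μ f g hf hg
end
end

section
/- The operator D preserves locally constant functions: if n ≥ m is an integer and f : E → ℝ satisfies f(x + t) = f(x) for all x ∈ E and all t ∈ p^n ℤ_p (note x + t ∈ E), then (Df)(x + t) = (Df)(x) for all x ∈ E and all t ∈ p^n ℤ_p. In particular, if f is locally constant then Df is locally constant. -/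
open MeasureTheory

noncomputable section

namespace IsUltrametricDist

variable {E : Type*}

lemma norm_add_eq_left_of_norm_lt [SeminormedAddGroup E] [IsUltrametricDist E] {a b : E}
    (h : ‖b‖ < ‖a‖) : ‖a + b‖ = ‖a‖ := by
  rw [norm_add_eq_max_of_norm_ne_norm h.ne', max_eq_left h.le]

variable [SeminormedAddCommGroup E] [IsUltrametricDist E]

lemma norm_sub_add_eq_of_norm_lt {x z t : E} (h : ‖t‖ < ‖z - x‖) :
    ‖z - (x + t)‖ = ‖z - x‖ := by
  rw [sub_add_eq_sub_sub, sub_eq_add_neg (z - x)]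
  exact norm_add_eq_left_of_norm_lt (by rwa [norm_neg])

/-- Near `x` the numerator vanishes; away from `x`, all points of the ball are equidistant
from `z`. -/
lemma kernel_add_eq_of_eqOn_closedBall {f : E → ℝ} {x t : E} {r : ℝ} (ht : ‖t‖ ≤ r)
    (hf : ∀ z ∈ Metric.closedBall x r, f z = f x) (z : E) :
    (f z - f (x + t)) / ‖z - (x + t)‖ ^ 2 = (f z - f x) / ‖z - x‖ ^ 2 := by
  rw [hf (x + t) (by simpa [mem_closedBall_iff_norm] using ht)]
  by_cases hz : ‖z - x‖ ≤ r
  · simp [hf z (mem_closedBall_iff_norm.2 hz)]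
  · rw [norm_sub_add_eq_of_norm_lt (ht.trans_lt (not_le.1 hz))]

end IsUltrametricDist

open IsUltrametricDist

variable {p m n : ℕ} [Fact p.Prime] {x : ℚ_[p]}

lemma zpow_neg_lt_norm_of_mem_Efund (hx : x ∈ Efund p m) (hn : m ≤ n) :
    (p : ℝ) ^ (-(n : ℤ)) < ‖x‖ := by
  have hp : (1 : ℝ) < p := by exact_mod_cast (Fact.out : p.Prime).one_lt
  exact (zpow_lt_zpow_right₀ hp (by omega)).trans_le hx.1

lemma closedBall_subset_Efund (hx : x ∈ Efund p m) (hn : m ≤ n) :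
    Metric.closedBall x ((p : ℝ) ^ (-(n : ℤ))) ⊆ Efund p m := by
  intro y hy
  have hyx : ‖y - x‖ < ‖x‖ :=
    (mem_closedBall_iff_norm.1 hy).trans_lt (zpow_neg_lt_norm_of_mem_Efund hx hn)
  have hy_norm : ‖y‖ = ‖x‖ := by simpa using norm_add_eq_left_of_norm_lt hyx
  simpa only [Efund, Set.mem_ofPred_eq, hy_norm] using hx

lemma Dop_add_eq_of_eqOn [MeasurableSpace ℚ_[p]] (μ : Measure ℚ_[p]) {f : ℚ_[p] → ℝ}
    (hx : x ∈ Efund p m) (hn : m ≤ n) {t : ℚ_[p]} (ht : ‖t‖ ≤ (p : ℝ) ^ (-(n : ℤ)))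
    (hf : ∀ z ∈ Efund p m, ‖z - x‖ ≤ (p : ℝ) ^ (-(n : ℤ)) → f z = f x) :
    Dop p m μ f (x + t) = Dop p m μ f x := by
  have hf_ball : ∀ z ∈ Metric.closedBall x ((p : ℝ) ^ (-(n : ℤ))), f z = f x := fun z hz =>
    hf z (closedBall_subset_Efund hx hn hz) (mem_closedBall_iff_norm.1 hz)
  rw [Dop, Dop, norm_add_eq_left_of_norm_lt (ht.trans_lt (zpow_neg_lt_norm_of_mem_Efund hx hn))]
  simp_rw [kernel_add_eq_of_eqOn_closedBall ht hf_ball]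

theorem Dop_preserves_locallyConstant_general (p m : ℕ) [Fact p.Prime]
    [MeasurableSpace ℚ_[p]]
    (μ : Measure ℚ_[p]) :
    (∀ n : ℕ, m ≤ n → ∀ f : ℚ_[p] → ℝ,
      (∀ x ∈ Efund p m, ∀ t : ℚ_[p], ‖t‖ ≤ (p : ℝ) ^ (-(n : ℤ)) → f (x + t) = f x) →
      ∀ x ∈ Efund p m, ∀ t : ℚ_[p], ‖t‖ ≤ (p : ℝ) ^ (-(n : ℤ)) →
        Dop p m μ f (x + t) = Dop p m μ f x) ∧
    (∀ f : ℚ_[p] → ℝ, LocConstOn p m f → LocConstOn p m (Dop p m μ f)) := by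
  refine ⟨fun n hn f hf x hx t ht => ?_, fun f hf x hx => ?_⟩
  · exact Dop_add_eq_of_eqOn μ hx hn ht fun z _ hz => by simpa using hf x hx (z - x) hz
  · obtain ⟨k, hk⟩ := hf x hx
    have hp : (1 : ℝ) ≤ p := by exact_mod_cast (Fact.out : p.Prime).one_lt.le
    have hradius : (p : ℝ) ^ (-((max k m : ℕ) : ℤ)) ≤ (p : ℝ) ^ (-(k : ℤ)) :=
      zpow_le_zpow_right₀ hp (by omega)
    refine ⟨max k m, fun y _ hyx => ?_⟩
    simpa using Dop_add_eq_of_eqOn μ hx (le_max_right k m) hyx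
      fun z hz hzx => hk z hz (hzx.trans hradius)

/-- `D` preserves locally constant functions: if `n ≥ m` and
`f(x + t) = f(x)` for all `x ∈ E` and `t ∈ p^n ℤ_p`, then `(Df)(x + t) = (Df)(x)`
for all `x ∈ E` and `t ∈ p^n ℤ_p`.  In particular, if `f` is locally constant then
`Df` is locally constant. -/
theorem Dop_preserves_locallyConstant (p m : ℕ) [Fact p.Prime] (hm : 1 ≤ m)
    [MeasurableSpace ℚ_[p]] [BorelSpace ℚ_[p]]
    (μ : Measure ℚ_[p]) [μ.IsAddHaarMeasure]
    (hμ : μ (Metric.closedBall 0 1) = 1) :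
    (∀ n : ℕ, m ≤ n → ∀ f : ℚ_[p] → ℝ,
      (∀ x ∈ Efund p m, ∀ t : ℚ_[p], ‖t‖ ≤ (p : ℝ) ^ (-(n : ℤ)) → f (x + t) = f x) →
      ∀ x ∈ Efund p m, ∀ t : ℚ_[p], ‖t‖ ≤ (p : ℝ) ^ (-(n : ℤ)) →
        Dop p m μ f (x + t) = Dop p m μ f x) ∧
    (∀ f : ℚ_[p] → ℝ, LocConstOn p m f → LocConstOn p m (Dop p m μ f)) :=
  Dop_preserves_locallyConstant_general p m μ
end
end

section
/- The operator D preserves conductor: for every integer k ≥ 1, if φ : E → ℝ has conductor k, then Dφ also has conductor k, i.e. (Dφ)(ux) = (Dφ)(x) for all x ∈ E and u ∈ 1 + p^k ℤ_p. -/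
/-! Since `k ≥ 1`, every `u ∈ 1 + p^k ℤ_p` has `|u| = 1`, so `z ↦ zu` is an isometry of `ℚ_p`
that maps `E` onto itself and preserves every additive Haar measure. Substituting `z ↦ zu` in the
integral defining `(Dφ)(xu)` turns it into `(Dψ)(x)` with `ψ = φ(· u)`, and `ψ = φ` on `E`. -/

open MeasureTheory

noncomputable section

/-- `f : E → ℝ` has conductor `k`: `f(xu) = f(x)` for all `x ∈ E` and all
`u ∈ 1 + p^k ℤ_p` (note `xu ∈ E`). -/
def HasConductor (p m : ℕ) [Fact p.Prime] (k : ℕ) (f : ℚ_[p] → ℝ) : Prop :=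
  ∀ x ∈ Efund p m, ∀ u : ℚ_[p], ‖u - 1‖ ≤ (p : ℝ) ^ (-(k : ℤ)) → f (x * u) = f x

open Metric

theorem measurePreserving_mul_right_of_norm_eq_one {𝕜 : Type*} [NormedField 𝕜] [ProperSpace 𝕜]
    [MeasurableSpace 𝕜] [BorelSpace 𝕜] (μ : Measure 𝕜) [μ.IsAddHaarMeasure] {u : 𝕜}
    (hu : ‖u‖ = 1) : MeasurePreserving (· * u) μ μ := by
  have hu0 : u ≠ 0 := norm_ne_zero_iff.mp (hu ▸ one_ne_zero)
  have : (μ.map (· * u)).IsAddHaarMeasure := by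
    have hv : (· * u) = ContinuousLinearEquiv.smulLeft (R₁ := 𝕜) (Units.mk0 u hu0) :=
      funext fun z => mul_comm z u
    exact hv ▸ (ContinuousLinearEquiv.smulLeft _).isAddHaarMeasure_map μ
  refine ⟨measurable_mul_const u, ?_⟩
  have hball : (μ.map (· * u)) (closedBall 0 1) = μ (closedBall 0 1) := by
    rw [Measure.map_apply (measurable_mul_const u) measurableSet_closedBall]
    congr 1
    ext z
    simp [norm_mul, hu]
  -- the closed unit ball is invariant and has finite positive measure, so it pins the scalar factor
  have hpos : μ (closedBall 0 1) ≠ 0 := (measure_closedBall_pos μ 0 one_pos).ne'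
  have hfin : μ (closedBall 0 1) ≠ ⊤ := (isCompact_closedBall 0 1).measure_lt_top.ne
  have hsmul := Measure.isAddLeftInvariant_eq_smul (μ.map (· * u)) μ
  rw [hsmul, Measure.smul_apply, ENNReal.smul_def, smul_eq_mul] at hball
  have hc : (μ.map (· * u)).addHaarScalarFactor μ = 1 := by
    exact_mod_cast (ENNReal.mul_eq_right hpos hfin).mp hball
  rw [hsmul, hc, one_smul]

theorem norm_eq_one_of_norm_sub_one_le {p : ℕ} [Fact p.Prime] {k : ℕ} (hk : 1 ≤ k) {u : ℚ_[p]}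
    (hu : ‖u - 1‖ ≤ (p : ℝ) ^ (-(k : ℤ))) : ‖u‖ = 1 := by
  have hp : (1 : ℝ) < p := by exact_mod_cast (Fact.out : p.Prime).one_lt
  have hlt : ‖u - 1‖ < ‖(1 : ℚ_[p])‖ := by
    rw [norm_one]
    exact hu.trans_lt (zpow_lt_one_of_neg₀ hp (by omega))
  simpa using Padic.norm_eq_of_norm_sub_lt_right hlt

theorem isClosed_Efund (p m : ℕ) [Fact p.Prime] : IsClosed (Efund p m) :=
  (isClosed_le continuous_const continuous_norm).inter (isClosed_le continuous_norm continuous_const)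

theorem preimage_mul_right_Efund (p m : ℕ) [Fact p.Prime] {u : ℚ_[p]} (hu : ‖u‖ = 1) :
    (· * u) ⁻¹' Efund p m = Efund p m := by
  ext z
  simp [Efund, norm_mul, hu]

section Dop

variable {p m : ℕ} [Fact p.Prime] [MeasurableSpace ℚ_[p]] [BorelSpace ℚ_[p]] (μ : Measure ℚ_[p])

theorem Dop_congr {φ ψ : ℚ_[p] → ℝ} {x : ℚ_[p]} (hx : φ x = ψ x)
    (h : Set.EqOn φ ψ (Efund p m)) : Dop p m μ φ x = Dop p m μ ψ x := by
  unfold Dop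
  rw [setIntegral_congr_fun (isClosed_Efund p m).measurableSet fun z hz => by rw [h hz, hx]]

theorem Dop_comp_mul_right [μ.IsAddHaarMeasure] (φ : ℚ_[p] → ℝ)
    (x : ℚ_[p]) {u : ℚ_[p]} (hu : ‖u‖ = 1) :
    Dop p m μ (fun z => φ (z * u)) x = Dop p m μ φ (x * u) := by
  have hu0 : u ≠ 0 := norm_ne_zero_iff.mp (hu ▸ one_ne_zero)
  have hscale : ∀ z, ‖z * u - x * u‖ = ‖z - x‖ := fun z => by
    rw [← sub_mul, norm_mul, hu, mul_one]
  unfold Dop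
  rw [norm_mul, hu, mul_one]
  congr 1
  calc ∫ z in Efund p m, (φ (z * u) - φ (x * u)) / ‖z - x‖ ^ 2 ∂μ
      = ∫ z in (· * u) ⁻¹' Efund p m, (φ (z * u) - φ (x * u)) / ‖z * u - x * u‖ ^ 2 ∂μ := by
        simp only [preimage_mul_right_Efund p m hu, hscale]
    _ = ∫ z in Efund p m, (φ z - φ (x * u)) / ‖z - x * u‖ ^ 2 ∂μ :=
        (measurePreserving_mul_right_of_norm_eq_one μ hu).setIntegral_preimage_emb
          (MeasurableEquiv.mulRight₀ u hu0).measurableEmbedding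
          (fun w => (φ w - φ (x * u)) / ‖w - x * u‖ ^ 2) _

end Dop

theorem Dop_preserves_conductor_general (p m : ℕ) [Fact p.Prime]
    [MeasurableSpace ℚ_[p]] [BorelSpace ℚ_[p]]
    (μ : Measure ℚ_[p]) [μ.IsAddHaarMeasure]
    (k : ℕ) (hk : 1 ≤ k) (φ : ℚ_[p] → ℝ) (hφ : HasConductor p m k φ) :
    HasConductor p m k (Dop p m μ φ) := by
  intro x hx u hu
  calc Dop p m μ φ (x * u) = Dop p m μ (fun z => φ (z * u)) x :=
        (Dop_comp_mul_right μ φ x (norm_eq_one_of_norm_sub_one_le hk hu)).symm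
    _ = Dop p m μ φ x := Dop_congr μ (hφ x hx u hu) fun z hz => hφ z hz u hu

/-- `D` preserves conductor: for every integer `k ≥ 1`, if
`φ : E → ℝ` has conductor `k`, then `Dφ` also has conductor `k`. -/
theorem Dop_preserves_conductor (p m : ℕ) [Fact p.Prime] (hm : 1 ≤ m)
    [MeasurableSpace ℚ_[p]] [BorelSpace ℚ_[p]]
    (μ : Measure ℚ_[p]) [μ.IsAddHaarMeasure]
    (hμ : μ (Metric.closedBall 0 1) = 1)
    (k : ℕ) (hk : 1 ≤ k) (φ : ℚ_[p] → ℝ) (hφ : HasConductor p m k φ) :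
    HasConductor p m k (Dop p m μ φ) :=
  Dop_preserves_conductor_general p m μ k hk φ hφ
end
end

section
/- For every integer k ≥ 1 there exists a symmetric Green's function on the finite quotient E_k (i.e., a Green's function G on E_k with G(x,y) = G(y,x) for all x, y ∈ E); moreover, any two symmetric Green's functions on E_k differ by a constant: if G₁ and G₂ are symmetric Green's functions on E_k, then there is c ∈ ℝ with G₁(x,y) = G₂(x,y) + c for all x, y ∈ E. -/
open MeasureTheory

noncomputable section

/-- A Green's function on the finite quotient `E_k`: a function `G : E × E → ℝ` of
conductor `k` in each variable such that for all `x, y ∈ E`,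
`(D G(·,y))(x) = p^k · 𝟙[x/y ∈ 1 + p^k ℤ_p] − 1/V` where `V = m (1 − 1/p)`. -/
def IsGreen (p m : ℕ) [Fact p.Prime] [MeasurableSpace ℚ_[p]]
    (μ : Measure ℚ_[p]) (k : ℕ) (G : ℚ_[p] → ℚ_[p] → ℝ) : Prop :=
  (∀ y ∈ Efund p m, HasConductor p m k (fun x => G x y)) ∧
  (∀ x ∈ Efund p m, HasConductor p m k (fun y => G x y)) ∧
  ∀ x ∈ Efund p m, ∀ y ∈ Efund p m,
    Dop p m μ (fun z => G z y) x =
      (if ‖x / y - 1‖ ≤ (p : ℝ) ^ (-(k : ℤ)) then (p : ℝ) ^ k else 0)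
        - 1 / ((m : ℝ) * (1 - 1 / (p : ℝ)))

/-- `G` is symmetric on `E × E`. -/
def IsSymmG (p m : ℕ) [Fact p.Prime] (G : ℚ_[p] → ℚ_[p] → ℝ) : Prop :=
  ∀ x ∈ Efund p m, ∀ y ∈ Efund p m, G x y = G y x

/-!
A function of conductor `k` on `E` is a function on the finite set `E_k` of classes
`x (1 + p^k ℤ_p)`, and each class is a closed ball of radius `p^{-k} |x|`. Since `|z - x|` is
constant while `z` runs over a ball not containing `x`, `D` acts on such functions as a weighted
graph Laplacian `L f (a) = ∑_b K(a,b) (f b - f a)` with symmetric weights, positive off the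
diagonal. Such an `L` is self-adjoint, its kernel consists of the constants (the Dirichlet energy
`∑ K(a,b) (f b - f a)^2` vanishes on it), and its range is the space of zero-sum functions; the
right-hand side `p^k 𝟙_b - 1/V` has zero sum because `#E_k = V p^k`. The zero-sum solutions are
symmetric in `(a, b)` by self-adjointness, and two symmetric solutions differ by a function that
is constant in each variable separately, hence constant.
-/

open Finset Metric

section WeightedLaplacian

variable {ι : Type*} [Fintype ι]

def weightedLaplacian (K : ι → ι → ℝ) : (ι → ℝ) →ₗ[ℝ] ι → ℝ where
  toFun f a := ∑ b, K a b * (f b - f a)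
  map_add' f g := by
    ext a
    simp only [Pi.add_apply, ← sum_add_distrib]
    exact sum_congr rfl fun b _ => by ring
  map_smul' c f := by
    ext a
    simp only [Pi.smul_apply, smul_eq_mul, RingHom.id_apply, mul_sum]
    exact sum_congr rfl fun b _ => by ring

lemma weightedLaplacian_apply (K : ι → ι → ℝ) (f : ι → ℝ) (a : ι) :
    weightedLaplacian K f a = ∑ b, K a b * (f b - f a) := rfl

variable {K : ι → ι → ℝ}

lemma sum_weightedLaplacian_mul (hK : ∀ a b, K a b = K b a) (f g : ι → ℝ) :
    ∑ a, weightedLaplacian K f a * g a = -(∑ a, ∑ b, K a b * (f b - f a) * (g b - g a)) / 2 := by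
  have hswap : ∑ a, ∑ b, K a b * (f b - f a) * g a = ∑ a, ∑ b, K a b * (f a - f b) * g b := by
    rw [sum_comm]
    exact sum_congr rfl fun a _ => sum_congr rfl fun b _ => by rw [hK]
  calc ∑ a, weightedLaplacian K f a * g a = ∑ a, ∑ b, K a b * (f b - f a) * g a := by
        simp only [weightedLaplacian_apply, sum_mul]
    _ = (∑ a, ∑ b, K a b * (f b - f a) * g a + ∑ a, ∑ b, K a b * (f a - f b) * g b) / 2 := by
        rw [← hswap]; ring
    _ = _ := by
        rw [← sum_add_distrib, ← sum_neg_distrib]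
        congr 1
        refine sum_congr rfl fun a _ => ?_
        rw [← sum_add_distrib, ← sum_neg_distrib]
        exact sum_congr rfl fun b _ => by ring

lemma sum_weightedLaplacian (hK : ∀ a b, K a b = K b a) (f : ι → ℝ) :
    ∑ a, weightedLaplacian K f a = 0 := by
  simpa using sum_weightedLaplacian_mul hK f 1

lemma sum_weightedLaplacian_mul_comm (hK : ∀ a b, K a b = K b a) (f g : ι → ℝ) :
    ∑ a, weightedLaplacian K f a * g a = ∑ a, f a * weightedLaplacian K g a := by
  simp_rw [mul_comm (f _), sum_weightedLaplacian_mul hK]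
  congr 2
  exact sum_congr rfl fun a _ => sum_congr rfl fun b _ => by ring

lemma eq_of_weightedLaplacian_eq_zero (hK : ∀ a b, K a b = K b a)
    (hpos : ∀ a b, a ≠ b → 0 < K a b) {f : ι → ℝ} (hf : weightedLaplacian K f = 0) (a b : ι) :
    f a = f b := by
  have hterm : ∀ a b, 0 ≤ K a b * (f b - f a) * (f b - f a) := fun a b => by
    rcases eq_or_ne a b with rfl | hab
    · simp
    · rw [mul_assoc]; exact mul_nonneg (hpos a b hab).le (mul_self_nonneg _)
  have henergy : ∑ a, ∑ b, K a b * (f b - f a) * (f b - f a) = 0 := by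
    have := sum_weightedLaplacian_mul hK f f
    simp only [hf, Pi.zero_apply, zero_mul, sum_const_zero] at this
    linarith
  have hzero := (Fintype.sum_eq_zero_iff_of_nonneg fun a => Fintype.sum_nonneg (hterm a)).mp
    henergy
  have hrow := (Fintype.sum_eq_zero_iff_of_nonneg (hterm b)).mp (congrFun hzero b)
  rcases eq_or_ne b a with rfl | hba
  · rfl
  · have := congrFun hrow a
    simp only [Pi.zero_apply, mul_assoc, mul_eq_zero, (hpos b a hba).ne', false_or, or_self] at this
    linarith

lemma exists_weightedLaplacian_eq (hK : ∀ a b, K a b = K b a)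
    (hpos : ∀ a b, a ≠ b → 0 < K a b) {r : ι → ℝ} (hr : ∑ a, r a = 0) :
    ∃ g, weightedLaplacian K g = r ∧ ∑ a, g a = 0 := by
  -- `L + S` is injective, as `S` detects the constants, so it is onto; a preimage of `r` has
  -- zero sum because both `L` and `r` do.
  let S : (ι → ℝ) →ₗ[ℝ] ι → ℝ := LinearMap.pi fun _ => ∑ b, LinearMap.proj b
  have hS : ∀ f a, S f a = ∑ b, f b := fun f a => by simp [S]
  have hsum : ∀ f, ∑ a, (weightedLaplacian K + S) f a = Fintype.card ι * ∑ b, f b := fun f => by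
    simp [hS, sum_add_distrib, sum_weightedLaplacian hK]
  have hcard : ∀ f : ι → ℝ, Fintype.card ι * ∑ b, f b = 0 → ∑ b, f b = 0 := fun f h => by
    rcases isEmpty_or_nonempty ι with hι | hι
    · simp
    · exact (mul_eq_zero.mp h).resolve_left (by simp)
  have hinj : Function.Injective (weightedLaplacian K + S) := by
    rw [← LinearMap.ker_eq_bot, LinearMap.ker_eq_bot']
    intro f hf
    have hf0 : ∑ b, f b = 0 := hcard f (by rw [← hsum, hf]; simp)
    have hL : weightedLaplacian K f = 0 := by
      ext a; simpa [hS, hf0] using congrFun hf a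
    ext a
    have : Fintype.card ι * f a = 0 := by
      simpa [eq_of_weightedLaplacian_eq_zero hK hpos hL _ a] using hf0
    exact (mul_eq_zero.mp this).resolve_left (by have : Nonempty ι := ⟨a⟩; simp)
  obtain ⟨g, hg⟩ := LinearMap.injective_iff_surjective.mp hinj r
  have hg0 : ∑ b, g b = 0 := hcard g (by rw [← hsum, hg, hr])
  refine ⟨g, ?_, hg0⟩
  ext a; simpa [hS, hg0] using congrFun hg a

lemma exists_symm_weightedLaplacian_eq_single_sub_const [DecidableEq ι] (hK : ∀ a b, K a b = K b a)
    (hpos : ∀ a b, a ≠ b → 0 < K a b) {c d : ℝ} (hc : c ≠ 0) (hcd : c = Fintype.card ι * d) :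
    ∃ G : ι → ι → ℝ,
      (∀ b, weightedLaplacian K (fun a => G a b) = fun a => (if a = b then c else 0) - d) ∧
      ∀ a b, G a b = G b a := by
  choose g hg hg0 using fun b => exists_weightedLaplacian_eq hK hpos
    (r := fun a => (if a = b then c else 0) - d) (by simp [sum_sub_distrib, hcd])
  refine ⟨fun a b => g b a, hg, fun a b => mul_left_cancel₀ hc ?_⟩
  -- self-adjointness tested on the zero-sum solutions `g b`, `g a` reads `c g b a = c g a b`
  have := sum_weightedLaplacian_mul_comm hK (g b) (g a)
  simp only [hg, mul_sub, sub_mul, sum_sub_distrib, ite_mul, mul_ite, zero_mul, mul_zero,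
    sum_ite_eq', mem_univ, if_true, ← sum_mul, ← mul_sum, hg0] at this
  linarith

lemma exists_eq_add_const_of_weightedLaplacian_eq (hK : ∀ a b, K a b = K b a)
    (hpos : ∀ a b, a ≠ b → 0 < K a b) {G₁ G₂ : ι → ι → ℝ} (hG₁ : ∀ a b, G₁ a b = G₁ b a)
    (hG₂ : ∀ a b, G₂ a b = G₂ b a)
    (h : ∀ b, weightedLaplacian K (fun a => G₁ a b) = weightedLaplacian K (fun a => G₂ a b)) :
    ∃ c, ∀ a b, G₁ a b = G₂ a b + c := by
  have hcol : ∀ b a a', G₁ a b - G₂ a b = G₁ a' b - G₂ a' b := fun b =>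
    eq_of_weightedLaplacian_eq_zero hK hpos (f := (fun a => G₁ a b) - fun a => G₂ a b)
      (by rw [map_sub, h, sub_self])
  rcases isEmpty_or_nonempty ι with hι | ⟨⟨a₀⟩⟩
  · exact ⟨0, fun a => isEmptyElim a⟩
  refine ⟨G₁ a₀ a₀ - G₂ a₀ a₀, fun a b => ?_⟩
  have := hcol b a a₀
  have := hcol a₀ b a₀
  rw [hG₁ a₀ b, hG₂ a₀ b] at *
  linarith

end WeightedLaplacian

namespace Padic

variable {p : ℕ} [hp : Fact p.Prime]

lemma exists_natCast_norm_sub_le {y : ℚ_[p]} (hy : ‖y‖ ≤ 1) (n : ℕ) :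
    ∃ c : ℕ, c < p ^ n ∧ ‖y - c‖ ≤ (p : ℝ) ^ (-(n : ℤ)) := by
  let w : ℤ_[p] := ⟨y, hy⟩
  refine ⟨w.appr n, w.appr_lt n, ?_⟩
  have := (w - w.appr n).norm_le_pow_iff_mem_span_pow n |>.mpr (w.appr_spec n)
  rwa [PadicInt.norm_def, PadicInt.coe_sub, PadicInt.coe_natCast] at this

lemma closedBall_zero_eq_iUnion (n : ℕ) :
    closedBall (0 : ℚ_[p]) ((p : ℝ) ^ (-(n : ℤ))) =
      ⋃ j : Fin p, closedBall ((j : ℚ_[p]) * (p : ℚ_[p]) ^ n) ((p : ℝ) ^ (-(n + 1 : ℤ))) := by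
  have hp0 : (0 : ℝ) < p := by exact_mod_cast hp.out.pos
  have hpQ : (p : ℚ_[p]) ≠ 0 := by exact_mod_cast hp.out.ne_zero
  ext x
  simp only [mem_closedBall, Set.mem_iUnion, dist_eq_norm, sub_zero]
  constructor
  · intro hx
    have hy : ‖x / (p : ℚ_[p]) ^ n‖ ≤ 1 := by
      rw [norm_div, norm_p_pow]; exact div_le_one_of_le₀ hx (zpow_pos hp0 _).le
    obtain ⟨c, hc, hyc⟩ := exists_natCast_norm_sub_le hy 1
    refine ⟨⟨c, by simpa using hc⟩, ?_⟩
    have hx : x - c * (p : ℚ_[p]) ^ n = (p : ℚ_[p]) ^ n * (x / (p : ℚ_[p]) ^ n - c) := by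
      field_simp
    rw [Fin.val_mk, hx, norm_mul, norm_p_pow, neg_add, zpow_add₀ hp0.ne']
    exact mul_le_mul_of_nonneg_left hyc (zpow_pos hp0 _).le
  · rintro ⟨j, hj⟩
    calc ‖x‖ = ‖(x - j * (p : ℚ_[p]) ^ n) + j * (p : ℚ_[p]) ^ n‖ := by ring_nf
      _ ≤ max ‖x - j * (p : ℚ_[p]) ^ n‖ ‖(j : ℚ_[p]) * (p : ℚ_[p]) ^ n‖ := nonarchimedean _ _
      _ ≤ (p : ℝ) ^ (-(n : ℤ)) := by
        refine max_le (hj.trans (zpow_le_zpow_right₀ (by exact_mod_cast hp.out.one_le)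
          (by omega))) ?_
        rw [norm_mul, norm_p_pow]
        exact mul_le_of_le_one_left (zpow_pos hp0 _).le
          (by exact_mod_cast norm_int_le_one (p := p) j)

lemma pairwise_disjoint_closedBall (n : ℕ) :
    Pairwise (Function.onFun Disjoint fun j : Fin p =>
      closedBall ((j : ℚ_[p]) * (p : ℚ_[p]) ^ n) ((p : ℝ) ^ (-(n + 1 : ℤ)))) := by
  have hp0 : (0 : ℝ) < p := by exact_mod_cast hp.out.pos
  intro i j hij
  refine Set.disjoint_left.mpr fun x hxi hxj => hij ?_
  rw [mem_closedBall, dist_eq_norm] at hxi hxj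
  have hdist : ‖(((i : ℤ) - j : ℤ) : ℚ_[p]) * (p : ℚ_[p]) ^ n‖ ≤ (p : ℝ) ^ (-(n + 1 : ℤ)) := by
    calc _ = ‖-(x - i * (p : ℚ_[p]) ^ n) + (x - j * (p : ℚ_[p]) ^ n)‖ := by push_cast; ring_nf
      _ ≤ _ := (nonarchimedean _ _).trans (max_le (by rwa [norm_neg]) hxj)
  rw [norm_mul, norm_p_pow, neg_add, zpow_add₀ hp0.ne', mul_comm,
    mul_le_mul_iff_of_pos_left (zpow_pos hp0 _)] at hdist
  have hdvd : (p : ℤ) ∣ (i : ℤ) - j := by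
    simpa using (norm_int_le_pow_iff_dvd _ 1).mp (by simpa using hdist)
  have := Int.eq_zero_of_abs_lt_dvd hdvd (by rw [abs_lt]; omega)
  omega

variable [MeasurableSpace ℚ_[p]] [BorelSpace ℚ_[p]]

open Measure in
lemma addHaar_closedBall (μ : Measure ℚ_[p]) [μ.IsAddHaarMeasure]
    (hμ : μ (closedBall 0 1) = 1) (c : ℚ_[p]) (n : ℕ) :
    μ (closedBall c ((p : ℝ) ^ (-(n : ℤ)))) = ENNReal.ofReal ((p : ℝ) ^ (-(n : ℤ))) := by
  have hp0 : (0 : ℝ) < p := by exact_mod_cast hp.out.pos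
  rw [addHaar_closedBall_center]
  induction n with
  | zero => simpa using hμ
  | succ n ih =>
    have hsplit := measure_iUnion (μ := μ) (pairwise_disjoint_closedBall n)
      fun _ => measurableSet_closedBall
    simp only [← closedBall_zero_eq_iUnion, ih, tsum_fintype, addHaar_closedBall_center,
      Finset.sum_const, Finset.card_univ, Fintype.card_fin, nsmul_eq_mul] at hsplit
    have hscale : ENNReal.ofReal ((p : ℝ) ^ (-(n : ℤ))) =
        p * ENNReal.ofReal ((p : ℝ) ^ (-(n + 1 : ℤ))) := by
      rw [← ENNReal.ofReal_natCast, ← ENNReal.ofReal_mul hp0.le, neg_add, zpow_add₀ hp0.ne',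
        zpow_neg_one, mul_left_comm, mul_inv_cancel₀ hp0.ne', mul_one]
    rw [hscale, ENNReal.mul_right_inj (by exact_mod_cast hp.out.ne_zero)
      (ENNReal.natCast_ne_top p)] at hsplit
    push_cast
    exact hsplit.symm

end Padic

lemma IsUltrametricDist.dist_eq_of_mem_closedBall_of_notMem {X : Type*} [PseudoMetricSpace X]
    [IsUltrametricDist X] {x y c : X} {r : ℝ} (hx : x ∈ closedBall c r)
    (hy : y ∉ closedBall c r) : dist y x = dist y c := by
  rw [mem_closedBall, dist_comm] at hx
  rw [mem_closedBall, not_le] at hy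
  rw [dist_eq_max_of_dist_ne_dist y c x (hx.trans_lt hy).ne', max_eq_left (hx.trans hy.le)]

-- `(s, u)` stands for the class `p^s u (1 + p^k ℤ_p)` of `E_k`, which is the ball `(s, u).ball`.
abbrev Ek (p m k : ℕ) := Fin m × (ZMod (p ^ k))ˣ

namespace Ek

variable {p m k : ℕ} [hp : Fact p.Prime]

def rep (a : Ek p m k) : ℚ_[p] := (p : ℚ_[p]) ^ (a.1 : ℕ) * ((a.2 : ZMod (p ^ k)).val : ℚ_[p])

def radius (a : Ek p m k) : ℝ := (p : ℝ) ^ (-((a.1 + k : ℕ) : ℤ))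

def ball (a : Ek p m k) : Set ℚ_[p] := closedBall a.rep a.radius

def classOf [NeZero m] (x : ℚ_[p]) : Ek p m k := Classical.epsilon fun a => x ∈ a.ball

-- `‖x‖ μ(b.ball) / ‖b.rep - a.rep‖²` for `x ∈ a.ball`; the junk value at `a = b` is never used.
def kernel (a b : Ek p m k) : ℝ := (p : ℝ) ^ (-((a.1 + b.1 + k : ℕ) : ℤ)) / ‖b.rep - a.rep‖ ^ 2

lemma kernel_comm (a b : Ek p m k) : kernel a b = kernel b a := by
  rw [kernel, kernel, norm_sub_rev, add_comm (a.1 : ℕ)]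

lemma rep_mem_ball (a : Ek p m k) : a.rep ∈ a.ball :=
  mem_closedBall_self (zpow_pos (by exact_mod_cast hp.out.pos) _).le

section Measure

variable [MeasurableSpace ℚ_[p]] [BorelSpace ℚ_[p]] {μ : Measure ℚ_[p]} [μ.IsAddHaarMeasure]

lemma measurableSet_ball (a : Ek p m k) : MeasurableSet a.ball := measurableSet_closedBall

lemma measureReal_ball (hμ : μ (closedBall 0 1) = 1) (a : Ek p m k) :
    μ.real a.ball = (p : ℝ) ^ (-((a.1 + k : ℕ) : ℤ)) := by
  rw [measureReal_def, ball, radius, Padic.addHaar_closedBall μ hμ,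
    ENNReal.toReal_ofReal (zpow_pos (by exact_mod_cast hp.out.pos) _).le]

end Measure

variable [NeZero k]

lemma norm_rep (a : Ek p m k) : ‖a.rep‖ = (p : ℝ) ^ (-(a.1 : ℤ)) := by
  have hcop : p.Coprime (a.2 : ZMod (p ^ k)).val :=
    (ZMod.val_coe_unit_coprime a.2).symm.coprime_dvd_left (dvd_pow_self p (NeZero.ne k))
  rw [rep, norm_mul, Padic.norm_p_pow, Padic.norm_natCast_eq_one_iff.mpr hcop, mul_one]

lemma radius_eq (a : Ek p m k) : a.radius = ‖a.rep‖ * (p : ℝ) ^ (-(k : ℤ)) := by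
  rw [radius, norm_rep, ← zpow_add₀ (by exact_mod_cast hp.out.ne_zero)]
  push_cast; ring_nf

lemma rep_ne_zero (a : Ek p m k) : a.rep ≠ 0 := by
  rw [← norm_pos_iff, norm_rep]; exact zpow_pos (by exact_mod_cast hp.out.pos) _

lemma radius_lt_norm_rep (a : Ek p m k) : a.radius < ‖a.rep‖ := by
  rw [radius_eq]
  refine mul_lt_of_lt_one_right (norm_pos_iff.mpr a.rep_ne_zero) (zpow_lt_one_of_neg₀ ?_ ?_)
  · exact_mod_cast hp.out.one_lt
  · simpa using Nat.pos_of_ne_zero (NeZero.ne k)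

lemma mem_ball_iff {a : Ek p m k} {x : ℚ_[p]} :
    x ∈ a.ball ↔ ‖x / a.rep - 1‖ ≤ (p : ℝ) ^ (-(k : ℤ)) := by
  rw [ball, mem_closedBall, dist_eq_norm, radius_eq, div_sub_one a.rep_ne_zero, norm_div,
    div_le_iff₀ (norm_pos_iff.mpr a.rep_ne_zero), mul_comm]

lemma norm_eq_of_mem_ball {a : Ek p m k} {x : ℚ_[p]} (hx : x ∈ a.ball) : ‖x‖ = ‖a.rep‖ :=
  Padic.norm_eq_of_norm_sub_lt_right (lt_of_le_of_lt hx a.radius_lt_norm_rep)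

lemma eq_of_mem_ball {a b : Ek p m k} {x : ℚ_[p]} (ha : x ∈ a.ball) (hb : x ∈ b.ball) :
    a = b := by
  have hp0 : (0 : ℝ) < p := by exact_mod_cast hp.out.pos
  have hfst : a.1 = b.1 := by
    have := (norm_eq_of_mem_ball ha).symm.trans (norm_eq_of_mem_ball hb)
    rw [norm_rep, norm_rep, zpow_right_inj₀ hp0 (by exact_mod_cast hp.out.ne_one)] at this
    exact Fin.ext (by omega)
  have hclose : ‖a.rep - b.rep‖ ≤ a.radius := by
    rw [← dist_eq_norm]
    refine (dist_triangle_max _ x _).trans (max_le ?_ ?_)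
    · rw [dist_comm]; exact ha
    · rw [radius, hfst]; exact hb
  have hval : ‖(((a.2 : ZMod (p ^ k)).val - (b.2 : ZMod (p ^ k)).val : ℤ) : ℚ_[p])‖ ≤
      (p : ℝ) ^ (-(k : ℤ)) := by
    push_cast
    rwa [rep, rep, hfst, ← mul_sub, norm_mul, radius_eq, norm_rep, hfst, Padic.norm_p_pow,
      mul_le_mul_iff_of_pos_left (zpow_pos hp0 _)] at hclose
  have hdvd := (Padic.norm_int_le_pow_iff_dvd _ k).mp hval
  have hunit : (a.2 : ZMod (p ^ k)) = b.2 := by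
    have := (ZMod.intCast_eq_intCast_iff_dvd_sub ((b.2 : ZMod (p ^ k)).val : ℤ)
      ((a.2 : ZMod (p ^ k)).val : ℤ) (p ^ k)).mpr (by exact_mod_cast hdvd)
    simpa using this.symm
  exact Prod.ext hfst (Units.ext hunit)

lemma exists_unit_norm_sub_le {y : ℚ_[p]} (hy : ‖y‖ = 1) :
    ∃ u : (ZMod (p ^ k))ˣ, ‖y - (u : ZMod (p ^ k)).val‖ ≤ (p : ℝ) ^ (-(k : ℤ)) := by
  obtain ⟨c, hc, hyc⟩ := Padic.exists_natCast_norm_sub_le hy.le k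
  have hc1 : ‖(c : ℚ_[p])‖ = 1 := by
    refine (Padic.norm_eq_of_norm_sub_lt_right ?_).trans hy
    rw [norm_sub_rev, hy]
    exact hyc.trans_lt (zpow_lt_one_of_neg₀ (by exact_mod_cast hp.out.one_lt)
      (by simpa using Nat.pos_of_ne_zero (NeZero.ne k)))
  have hcop : c.Coprime (p ^ k) := (Padic.norm_natCast_eq_one_iff.mp hc1).symm.pow_right k
  refine ⟨ZMod.unitOfCoprime c hcop, ?_⟩
  rwa [ZMod.coe_unitOfCoprime, ZMod.val_natCast_of_lt hc]

lemma exists_lt_norm_eq_of_mem_Efund {x : ℚ_[p]} (hx : x ∈ Efund p m) :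
    ∃ s < m, ‖x‖ = (p : ℝ) ^ (-(s : ℤ)) := by
  have hp1 : (1 : ℝ) < p := by exact_mod_cast hp.out.one_lt
  have hx0 : x ≠ 0 := by
    rintro rfl
    exact (zpow_pos (zero_lt_one.trans hp1) _).not_ge (by simpa using hx.1)
  obtain ⟨hlow, hup⟩ := hx
  rw [Padic.norm_eq_zpow_neg_valuation hx0] at hlow hup ⊢
  have h0 : 0 ≤ x.valuation := by
    by_contra h
    exact (one_lt_zpow₀ hp1 (by omega)).not_ge hup
  have hm : x.valuation < m := by
    by_contra h
    exact (zpow_lt_zpow_right₀ hp1 (by omega)).not_ge hlow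
  exact ⟨x.valuation.toNat, by omega, by rw [Int.toNat_of_nonneg h0]⟩

lemma exists_mem_ball {x : ℚ_[p]} (hx : x ∈ Efund p m) : ∃ a : Ek p m k, x ∈ a.ball := by
  have hp0 : (0 : ℝ) < p := by exact_mod_cast hp.out.pos
  have hpQ : (p : ℚ_[p]) ≠ 0 := by exact_mod_cast hp.out.ne_zero
  obtain ⟨s, hs, hxs⟩ := exists_lt_norm_eq_of_mem_Efund hx
  have hy : ‖x / (p : ℚ_[p]) ^ s‖ = 1 := by
    rw [norm_div, Padic.norm_p_pow, hxs, div_self (zpow_pos hp0 _).ne']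
  obtain ⟨u, hu⟩ := exists_unit_norm_sub_le (k := k) hy
  refine ⟨(⟨s, hs⟩, u), ?_⟩
  have hx : x - (p : ℚ_[p]) ^ s * (u : ZMod (p ^ k)).val =
      (p : ℚ_[p]) ^ s * (x / (p : ℚ_[p]) ^ s - (u : ZMod (p ^ k)).val) := by
    field_simp
  rw [ball, mem_closedBall, dist_eq_norm, radius_eq, norm_rep, rep, hx, norm_mul,
    Padic.norm_p_pow]
  exact mul_le_mul_of_nonneg_left hu (zpow_pos hp0 _).le

lemma ball_subset_Efund (a : Ek p m k) : a.ball ⊆ Efund p m := by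
  have hp1 : (1 : ℝ) ≤ p := by exact_mod_cast hp.out.one_le
  intro x hx
  have := a.1.isLt
  rw [Efund, Set.mem_ofPred_eq, norm_eq_of_mem_ball hx, norm_rep]
  exact ⟨zpow_le_zpow_right₀ hp1 (by omega), zpow_le_one_of_nonpos₀ hp1 (by omega)⟩

lemma norm_sub_eq_of_mem_ball {a b : Ek p m k} (hab : a ≠ b) {x z : ℚ_[p]} (hx : x ∈ a.ball)
    (hz : z ∈ b.ball) : ‖z - x‖ = ‖b.rep - a.rep‖ := by
  rw [← dist_eq_norm, ← dist_eq_norm,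
    IsUltrametricDist.dist_eq_of_mem_closedBall_of_notMem hx fun h => hab (eq_of_mem_ball h hz),
    dist_comm, IsUltrametricDist.dist_eq_of_mem_closedBall_of_notMem hz
      fun h => hab (eq_of_mem_ball a.rep_mem_ball h), dist_comm]

lemma rep_mem_Efund (a : Ek p m k) : a.rep ∈ Efund p m := a.ball_subset_Efund a.rep_mem_ball

lemma Efund_eq_iUnion_ball : Efund p m = ⋃ a : Ek p m k, a.ball :=
  Set.Subset.antisymm (fun _ hx => Set.mem_iUnion.mpr (exists_mem_ball hx))
    (Set.iUnion_subset ball_subset_Efund)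

lemma pairwise_disjoint_ball : Pairwise (Function.onFun Disjoint fun a : Ek p m k => a.ball) :=
  fun _ _ hab => Set.disjoint_left.mpr fun _ ha hb => hab (eq_of_mem_ball ha hb)

lemma kernel_pos {a b : Ek p m k} (hab : a ≠ b) : 0 < kernel a b := by
  refine div_pos (zpow_pos (by exact_mod_cast hp.out.pos) _) (pow_pos (norm_pos_iff.mpr ?_) 2)
  exact sub_ne_zero.mpr fun h => hab (eq_of_mem_ball a.rep_mem_ball (h ▸ b.rep_mem_ball))

lemma mul_mem_ball {a : Ek p m k} {x u : ℚ_[p]} (hx : x ∈ a.ball)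
    (hu : ‖u - 1‖ ≤ (p : ℝ) ^ (-(k : ℤ))) : x * u ∈ a.ball := by
  have hxu : x * u - a.rep = x * (u - 1) + (x - a.rep) := by ring
  rw [ball, mem_closedBall, dist_eq_norm, hxu]
  refine (IsUltrametricDist.norm_add_le_max _ _).trans (max_le ?_ hx)
  rw [norm_mul, norm_eq_of_mem_ball hx, radius_eq]
  exact mul_le_mul_of_nonneg_left hu (norm_nonneg _)

section classOf

variable [NeZero m]

lemma mem_ball_classOf {x : ℚ_[p]} (hx : x ∈ Efund p m) : x ∈ (classOf x : Ek p m k).ball :=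
  Classical.epsilon_spec (exists_mem_ball hx)

lemma classOf_eq_of_mem_ball {a : Ek p m k} {x : ℚ_[p]} (hx : x ∈ a.ball) : classOf x = a :=
  eq_of_mem_ball (mem_ball_classOf (a.ball_subset_Efund hx)) hx

@[simp]
lemma classOf_rep (a : Ek p m k) : classOf a.rep = a := classOf_eq_of_mem_ball a.rep_mem_ball

lemma classOf_mul {x u : ℚ_[p]} (hx : x ∈ Efund p m) (hu : ‖u - 1‖ ≤ (p : ℝ) ^ (-(k : ℤ))) :
    (classOf (x * u) : Ek p m k) = classOf x :=
  classOf_eq_of_mem_ball (mul_mem_ball (mem_ball_classOf hx) hu)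

lemma classOf_eq_classOf_iff {x y : ℚ_[p]} (hx : x ∈ Efund p m) (hy : y ∈ Efund p m) :
    (classOf x : Ek p m k) = classOf y ↔ ‖x / y - 1‖ ≤ (p : ℝ) ^ (-(k : ℤ)) := by
  have hy0 : y ≠ 0 := by
    rintro rfl
    exact (zpow_pos (by exact_mod_cast hp.out.pos : (0 : ℝ) < p) _).not_ge (by simpa using hy.1)
  constructor
  · intro h
    have hxy := (mem_ball_classOf (k := k) hx)
    rw [h] at hxy
    have hyb := mem_ball_classOf (k := k) hy
    rw [div_sub_one hy0, norm_div, div_le_iff₀ (norm_pos_iff.mpr hy0), norm_eq_of_mem_ball hyb,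
      mul_comm, ← radius_eq, ← dist_eq_norm]
    exact (dist_triangle_max _ (classOf y : Ek p m k).rep _).trans
      (max_le hxy (by rw [dist_comm]; exact hyb))
  · intro h
    rw [← classOf_mul hy h, mul_div_cancel₀ x hy0]

end classOf

lemma card_eq :
    (Fintype.card (Ek p m k) : ℝ) = m * (1 - 1 / p) * (p : ℝ) ^ k := by
  have hp0 : (p : ℝ) ≠ 0 := by exact_mod_cast hp.out.ne_zero
  obtain ⟨j, rfl⟩ := Nat.exists_eq_add_of_lt (Nat.pos_of_ne_zero (NeZero.ne k))
  rw [Fintype.card_prod, Fintype.card_fin, ZMod.card_units_eq_totient,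
    Nat.totient_prime_pow_succ hp.out]
  push_cast [Nat.cast_sub hp.out.one_le]
  field_simp
  ring

end Ek

open Ek

section GreenFunctions

variable {p m k : ℕ} [Fact p.Prime] [NeZero k]

lemma HasConductor.apply_eq_rep {f : ℚ_[p] → ℝ} (hf : HasConductor p m k f) {a : Ek p m k}
    {x : ℚ_[p]} (hx : x ∈ a.ball) : f x = f a.rep := by
  rw [← hf a.rep a.rep_mem_Efund _ (mem_ball_iff.mp hx), mul_div_cancel₀ x a.rep_ne_zero]

lemma HasConductor.apply_eq_rep_classOf [NeZero m] {f : ℚ_[p] → ℝ} (hf : HasConductor p m k f)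
    {x : ℚ_[p]} (hx : x ∈ Efund p m) : f x = f (classOf x : Ek p m k).rep :=
  hf.apply_eq_rep (mem_ball_classOf hx)

lemma IsGreen.apply_eq_rep_classOf [NeZero m] [MeasurableSpace ℚ_[p]] {μ : Measure ℚ_[p]}
    {G : ℚ_[p] → ℚ_[p] → ℝ} (hG : IsGreen p m μ k G) {x y : ℚ_[p]} (hx : x ∈ Efund p m)
    (hy : y ∈ Efund p m) : G x y = G (classOf x : Ek p m k).rep (classOf y : Ek p m k).rep := by
  rw [(hG.1 y hy).apply_eq_rep_classOf hx, (hG.2.1 _ (rep_mem_Efund _)).apply_eq_rep_classOf hy]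

variable [MeasurableSpace ℚ_[p]] [BorelSpace ℚ_[p]] {μ : Measure ℚ_[p]} [μ.IsAddHaarMeasure]

theorem Dop_eq_weightedLaplacian [NeZero m] (hμ : μ (closedBall 0 1) = 1) {f : ℚ_[p] → ℝ}
    (hf : HasConductor p m k f) {x : ℚ_[p]} (hx : x ∈ Efund p m) :
    Dop p m μ f x = weightedLaplacian kernel (fun b => f b.rep) (classOf x : Ek p m k) := by
  set a : Ek p m k := classOf x
  have hxa : x ∈ a.ball := mem_ball_classOf hx
  have hconst : ∀ b : Ek p m k, Set.EqOn (fun z => (f z - f x) / ‖z - x‖ ^ 2)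
      (fun _ => (f b.rep - f a.rep) / ‖b.rep - a.rep‖ ^ 2) b.ball := by
    intro b z hz
    dsimp only
    rw [hf.apply_eq_rep hxa, hf.apply_eq_rep hz]
    -- on `a.ball` both numerators vanish; off it, `‖z - x‖` only depends on the ball of `z`
    rcases eq_or_ne a b with rfl | hab
    · simp
    · rw [norm_sub_eq_of_mem_ball hab hxa hz]
  have hint : ∀ b : Ek p m k, IntegrableOn (fun z => (f z - f x) / ‖z - x‖ ^ 2) b.ball μ :=
    fun b => (integrableOn_congr_fun (hconst b) b.measurableSet_ball).mpr
      (integrableOn_const (isCompact_closedBall _ _).measure_lt_top.ne)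
  rw [Dop, Efund_eq_iUnion_ball (k := k), integral_iUnion_fintype measurableSet_ball
    pairwise_disjoint_ball hint, norm_eq_of_mem_ball hxa, norm_rep, Finset.mul_sum]
  refine Finset.sum_congr rfl fun b _ => ?_
  rw [setIntegral_congr_fun b.measurableSet_ball (hconst b), setIntegral_const, smul_eq_mul,
    measureReal_ball hμ, kernel, ← mul_assoc,
    ← zpow_add₀ (by exact_mod_cast (Fact.out : p.Prime).ne_zero)]
  push_cast
  ring_nf

variable [NeZero m]

lemma IsGreen.weightedLaplacian_eq (hμ : μ (closedBall 0 1) = 1) {G : ℚ_[p] → ℚ_[p] → ℝ}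
    (hG : IsGreen p m μ k G) (b : Ek p m k) :
    weightedLaplacian kernel (fun a => G a.rep b.rep) =
      fun a => (if a = b then (p : ℝ) ^ k else 0) - 1 / ((m : ℝ) * (1 - 1 / (p : ℝ))) := by
  ext a
  have := hG.2.2 a.rep a.rep_mem_Efund b.rep b.rep_mem_Efund
  simpa only [Dop_eq_weightedLaplacian hμ (hG.1 _ b.rep_mem_Efund) a.rep_mem_Efund,
    ← classOf_eq_classOf_iff a.rep_mem_Efund b.rep_mem_Efund, classOf_rep] using this

lemma isGreen_comp_classOf (hμ : μ (closedBall 0 1) = 1) {H : Ek p m k → Ek p m k → ℝ}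
    (hH : ∀ b, weightedLaplacian kernel (fun a => H a b) =
      fun a => (if a = b then (p : ℝ) ^ k else 0) - 1 / ((m : ℝ) * (1 - 1 / (p : ℝ)))) :
    IsGreen p m μ k fun x y => H (classOf x) (classOf y) := by
  have hcond : ∀ y, HasConductor p m k fun x => H (classOf x) (classOf y) :=
    fun y x hx u hu => by simp only [classOf_mul hx hu]
  refine ⟨fun y _ => hcond y, fun x _ y hy u hu => by simp only [classOf_mul hy hu],
    fun x hx y hy => ?_⟩
  rw [Dop_eq_weightedLaplacian hμ (hcond y) hx]
  simp only [classOf_rep, hH, classOf_eq_classOf_iff hx hy]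

end GreenFunctions

/-- For every `k ≥ 1` there exists a symmetric Green's function on
the finite quotient `E_k`; moreover, any two symmetric Green's functions on `E_k`
differ by a constant. -/
theorem green_exists_unique_on_finite_quotient (p m : ℕ) [Fact p.Prime] (hm : 1 ≤ m)
    [MeasurableSpace ℚ_[p]] [BorelSpace ℚ_[p]]
    (μ : Measure ℚ_[p]) [μ.IsAddHaarMeasure]
    (hμ : μ (Metric.closedBall 0 1) = 1)
    (k : ℕ) (hk : 1 ≤ k) :
    (∃ G : ℚ_[p] → ℚ_[p] → ℝ, IsGreen p m μ k G ∧ IsSymmG p m G) ∧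
    (∀ G₁ G₂ : ℚ_[p] → ℚ_[p] → ℝ,
      IsGreen p m μ k G₁ → IsSymmG p m G₁ →
      IsGreen p m μ k G₂ → IsSymmG p m G₂ →
      ∃ c : ℝ, ∀ x ∈ Efund p m, ∀ y ∈ Efund p m, G₁ x y = G₂ x y + c) := by
  have : NeZero m := ⟨by omega⟩
  have : NeZero k := ⟨by omega⟩
  have hm0 : (m : ℝ) ≠ 0 := by exact_mod_cast NeZero.ne m
  have hp1 : 1 - 1 / (p : ℝ) ≠ 0 := by
    have : (1 : ℝ) < p := by exact_mod_cast (Fact.out : p.Prime).one_lt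
    exact sub_ne_zero.mpr ((div_lt_one (by linarith)).mpr this).ne'
  have hcard : (p : ℝ) ^ k =
      Fintype.card (Ek p m k) * (1 / ((m : ℝ) * (1 - 1 / (p : ℝ)))) := by
    rw [Ek.card_eq]; field_simp
  constructor
  · obtain ⟨H, hH, hHsymm⟩ := exists_symm_weightedLaplacian_eq_single_sub_const Ek.kernel_comm
      (fun _ _ => Ek.kernel_pos) (pow_ne_zero k (by exact_mod_cast (Fact.out : p.Prime).ne_zero))
      hcard
    exact ⟨_, isGreen_comp_classOf hμ hH, fun x _ y _ => hHsymm _ _⟩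
  · intro G₁ G₂ h₁ h₁s h₂ h₂s
    obtain ⟨c, hc⟩ := exists_eq_add_const_of_weightedLaplacian_eq Ek.kernel_comm
      (fun _ _ => Ek.kernel_pos) (fun a b => h₁s _ a.rep_mem_Efund _ b.rep_mem_Efund)
      (fun a b => h₂s _ a.rep_mem_Efund _ b.rep_mem_Efund)
      fun b => (h₁.weightedLaplacian_eq hμ b).trans (h₂.weightedLaplacian_eq hμ b).symm
    exact ⟨c, fun x hx y hy => by
      rw [h₁.apply_eq_rep_classOf hx hy, h₂.apply_eq_rep_classOf hx hy, hc]⟩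
end
end

section
/- A symmetric solution of a linear matrix equation with centrosymmetric data is centrosymmetric: let n ≥ 1 and let A, B ∈ M_n(ℝ) be centrosymmetric matrices with rank(A) ≥ n − 1. If Z ∈ M_n(ℝ) is symmetric and satisfies AZ = B, then Z is centrosymmetric, i.e. JZJ = Z. -/
/-!
`W := JZJ - Z` is symmetric, satisfies `JWJ = -W`, and `AW = 0`. Since `ker A` has dimension
at most one, `W` has rank at most one, so its `2 × 2` minors vanish: `W i j ^ 2 = W i i * W j j`.
Taking `j = rev i` gives `W (i, rev i) ^ 2 = -(W i i) ^ 2`, so the diagonal of `W` vanishes,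
and then so does every entry.
-/

/-- The `n × n` exchange matrix `J`, with `J i j = 1` iff `i + j = n - 1`
(0-based indexing, corresponding to `i + j = n + 1` in 1-based indexing). -/
def exchMatrix (n : ℕ) : Matrix (Fin n) (Fin n) ℝ :=
  Matrix.of fun i j => if (i : ℕ) + (j : ℕ) = n - 1 then 1 else 0

namespace Matrix

variable {m n K : Type*}

theorem exists_eq_vecMulVec_of_rank_le_one [Field K] [Fintype n] {M : Matrix m n K}
    (hM : M.rank ≤ 1) : ∃ (v : m → K) (c : n → K), M = vecMulVec v c := by
  have hfin := Module.Finite.span_of_finite K (Set.finite_range M.col)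
  rw [rank_eq_finrank_span_cols, Submodule.finrank_le_one_iff_isPrincipal] at hM
  obtain ⟨v, hv⟩ := hM
  have hcol (j : n) : ∃ c : K, c • v = M.col j :=
    Submodule.mem_span_singleton.mp (hv ▸ Submodule.subset_span ⟨j, rfl⟩)
  choose c hc using hcol
  refine ⟨v, c, ext fun i j => ?_⟩
  rw [vecMulVec_apply, ← col_apply M j i, ← hc, Pi.smul_apply, smul_eq_mul, mul_comm]

theorem eq_zero_of_isSymm_of_rank_le_one_of_submatrix_eq_neg [Field K] [LinearOrder K]
    [IsStrictOrderedRing K] [Fintype n] {W : Matrix n n K} (σ : n → n) (hW : W.IsSymm)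
    (hrank : W.rank ≤ 1) (hσ : W.submatrix σ σ = -W) : W = 0 := by
  obtain ⟨v, c, rfl⟩ := exists_eq_vecMulVec_of_rank_le_one hrank
  set W := vecMulVec v c
  have hsq (i j : n) : W i j ^ 2 = W i i * W j j := by
    calc W i j ^ 2 = W i j * W j i := by rw [sq, hW.apply i j]
      _ = W i i * W j j := by simp only [W, vecMulVec_apply]; ring
  have hdiag (i : n) : W i i = 0 := by
    have hneg : W (σ i) (σ i) = -W i i := congrFun (congrFun hσ i) i
    -- `W i (σ i) ^ 2 = W i i * W (σ i) (σ i) = -(W i i) ^ 2`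
    nlinarith [sq_nonneg (W i (σ i)), sq_nonneg (W i i), hsq i (σ i)]
  ext i j
  simpa [hdiag] using hsq i j

end Matrix

theorem exchMatrix_eq_toMatrix_revPerm (n : ℕ) :
    exchMatrix n = (Fin.revPerm.toPEquiv.toMatrix : Matrix (Fin n) (Fin n) ℝ) := by
  ext i j
  simp only [exchMatrix, Matrix.of_apply, PEquiv.toMatrix_apply, Equiv.toPEquiv_apply,
    Option.mem_def, Option.some.injEq, Fin.revPerm_apply]
  congr 1
  simp only [eq_iff_iff, Fin.ext_iff, Fin.val_rev]
  omega

theorem exchMatrix_mul_mul_exchMatrix (n : ℕ) (M : Matrix (Fin n) (Fin n) ℝ) :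
    exchMatrix n * M * exchMatrix n = M.submatrix Fin.revPerm Fin.revPerm := by
  rw [exchMatrix_eq_toMatrix_revPerm, PEquiv.toMatrix_toPEquiv_mul,
    PEquiv.mul_toMatrix_toPEquiv, Matrix.submatrix_submatrix, Fin.revPerm_symm]
  rfl

theorem symm_solution_centrosymmetric_general (n : ℕ)
    (A B Z : Matrix (Fin n) (Fin n) ℝ)
    (hA : exchMatrix n * A * exchMatrix n = A)
    (hB : exchMatrix n * B * exchMatrix n = B)
    (hrank : n - 1 ≤ A.rank)
    (hZ : Z.IsSymm) (hAZ : A * Z = B) :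
    exchMatrix n * Z * exchMatrix n = Z := by
  rw [exchMatrix_mul_mul_exchMatrix] at hA hB ⊢
  set W := Z.submatrix Fin.revPerm Fin.revPerm - Z
  have hAW : A * W = 0 := by
    rw [Matrix.mul_sub, ← hA, Matrix.submatrix_mul_equiv, hAZ, hA, hAZ, hB, sub_self]
  have hWrank : W.rank ≤ 1 := by
    have := Matrix.rank_add_rank_le_card_of_mul_eq_zero hAW
    rw [Fintype.card_fin] at this
    omega
  have hWsymm : W.IsSymm := by
    simp only [W, Matrix.IsSymm, Matrix.transpose_sub, Matrix.transpose_submatrix, hZ.eq]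
  have hWanti : W.submatrix Fin.rev Fin.rev = -W := by
    ext i j
    simp [W]
  exact sub_eq_zero.mp
    (Matrix.eq_zero_of_isSymm_of_rank_le_one_of_submatrix_eq_neg _ hWsymm hWrank hWanti)

/-- A symmetric solution of a linear matrix equation with
centrosymmetric data is centrosymmetric: let `A, B` be centrosymmetric with
`rank A ≥ n − 1`.  If `Z` is symmetric and `A Z = B`, then `J Z J = Z`. -/
theorem symm_solution_centrosymmetric (n : ℕ) (hn : 1 ≤ n)
    (A B Z : Matrix (Fin n) (Fin n) ℝ)
    (hA : exchMatrix n * A * exchMatrix n = A)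
    (hB : exchMatrix n * B * exchMatrix n = B)
    (hrank : n - 1 ≤ A.rank)
    (hZ : Z.IsSymm) (hAZ : A * Z = B) :
    exchMatrix n * Z * exchMatrix n = Z :=
  symm_solution_centrosymmetric_general n A B Z hA hB hrank hZ hAZ
end

section
/- The regular part C of the Green's function can be symmetrized: there exists a symmetric matrix C ∈ M_m(ℝ) satisfying (P − Λ) C = (1/(1 − p^{−1})) (P Λ^{−1} − (1/m) 𝟙𝟙ᵀ). -/
/-- The matrix `P i j = (1 − p⁻¹) p^{−|i−j|}`. -/
noncomputable def Pmat (p m : ℕ) : Matrix (Fin m) (Fin m) ℝ :=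
  Matrix.of fun i j => (1 - (p : ℝ)⁻¹) * (p : ℝ) ^ (-|(i : ℤ) - (j : ℤ)|)

/-- The diagonal entries `Λ_i = Σ_j P i j`. -/
noncomputable def LamDiag (p m : ℕ) (i : Fin m) : ℝ := ∑ j, Pmat p m i j

/-! Write `A = P − Λ` and `𝕁 = 𝟙𝟙ᵀ`. The matrix `A` is symmetric with `𝕁 A = 0`, and its kernel
consists of the constant vectors, because `xᵀ (Λ − P) x = ½ Σᵢⱼ Pᵢⱼ (xᵢ − xⱼ)²` with `P > 0`.
The right-hand side `B` has `𝕁 B = 0`, and `B A` is a multiple of `P Λ⁻¹ P − P`, hence symmetric.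
For any such pair, `A + 𝕁` is invertible and `G = (A + 𝕁)⁻¹` is symmetric with `A G = 1 − 𝕁 / m`,
so `C = G B + Bᵀ G − G (B A) G` is a symmetric solution of `A C = B`. -/

open Matrix Finset

local notation "𝕁" => Matrix.of fun _ _ => 1

theorem ones_mul_ones {n R : Type*} [Fintype n] [NonAssocSemiring R] :
    (𝕁 : Matrix n n R) * 𝕁 = (Fintype.card n : R) • 𝕁 := by
  ext i j
  simp [mul_apply]

theorem ones_mul_inv_card_smul_ones {n K : Type*} [Fintype n] [Nonempty n] [Field K] [CharZero K] :
    (𝕁 : Matrix n n K) * ((Fintype.card n : K)⁻¹ • 𝕁) = 𝕁 := by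
  rw [Matrix.mul_smul, ones_mul_ones, smul_smul,
    inv_mul_cancel₀ (Nat.cast_ne_zero.mpr Fintype.card_ne_zero), one_smul]

section Symmetrize

variable {n K : Type*} [Fintype n] [DecidableEq n] [Field K] [CharZero K] {A B : Matrix n n K}

theorem isUnit_add_ones [Nonempty n] (hA1 : 𝕁 * A = 0)
    (hker : ∀ x, A *ᵥ x = 0 → ∀ i j, x i = x j) : IsUnit (A + 𝕁) := by
  have hcard : (Fintype.card n : K) ≠ 0 := Nat.cast_ne_zero.mpr Fintype.card_ne_zero
  rw [← mulVec_injective_iff_isUnit, ← coe_mulVecLin, ← LinearMap.ker_eq_bot,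
    LinearMap.ker_eq_bot']
  intro x hx
  rw [mulVecLin_apply, add_mulVec] at hx
  have hJx : (𝕁 : Matrix n n K) *ᵥ x = 0 := by
    have h := congrArg ((𝕁 : Matrix n n K) *ᵥ ·) hx
    rw [mulVec_add, mulVec_mulVec, mulVec_mulVec, hA1, ones_mul_ones, zero_mulVec, zero_add,
      smul_mulVec, mulVec_zero, smul_eq_zero] at h
    exact h.resolve_left hcard
  have hconst := hker x (by simpa [hJx] using hx)
  funext i
  have h := congrFun hJx i
  simp only [mulVec, dotProduct, of_apply, one_mul, Pi.zero_apply] at h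
  simpa [fun j => hconst j i, hcard] using h

theorem ones_mul_inv_add_ones [Nonempty n] (hA1 : 𝕁 * A = 0) (hM : IsUnit (A + 𝕁)) :
    𝕁 * (A + 𝕁)⁻¹ = (Fintype.card n : K)⁻¹ • 𝕁 := by
  have hcard : (Fintype.card n : K) ≠ 0 := Nat.cast_ne_zero.mpr Fintype.card_ne_zero
  have h : (Fintype.card n : K) • (𝕁 * (A + 𝕁)⁻¹) = 𝕁 := by
    rw [← smul_mul, ← ones_mul_ones, ← add_zero (𝕁 * 𝕁), ← hA1, ← Matrix.mul_add, add_comm,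
      Matrix.mul_assoc, mul_nonsing_inv _ ((isUnit_iff_isUnit_det _).mp hM), Matrix.mul_one]
  rw [← inv_smul_smul₀ hcard (𝕁 * _), h]

theorem exists_isSymm_mul_eq (hA : A.IsSymm) (hA1 : 𝕁 * A = 0)
    (hker : ∀ x, A *ᵥ x = 0 → ∀ i j, x i = x j) (hB : 𝕁 * B = 0) (hBA : (B * A).IsSymm) :
    ∃ C : Matrix n n K, C.IsSymm ∧ A * C = B := by
  rcases isEmpty_or_nonempty n with hn | hn
  · exact ⟨0, isSymm_zero, Subsingleton.elim _ _⟩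
  have hM := isUnit_add_ones hA1 hker
  set G := (A + 𝕁)⁻¹ with hG_def
  have hG : G.IsSymm := by
    rw [IsSymm, hG_def, transpose_nonsing_inv, transpose_add, hA.eq]
    simp [transpose]
  have hAG : A * G = 1 - (Fintype.card n : K)⁻¹ • 𝕁 := by
    rw [eq_sub_iff_add_eq, ← ones_mul_inv_add_ones hA1 hM, ← Matrix.add_mul,
      mul_nonsing_inv _ ((isUnit_iff_isUnit_det _).mp hM)]
  have hABt : A * Bᵀ = B * A := by rw [← hA.eq, ← transpose_mul, hBA.eq, hA.eq]
  have hAGB (X : Matrix n n K) : A * (G * (B * X)) = B * X := by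
    rw [← Matrix.mul_assoc, hAG, Matrix.sub_mul, Matrix.one_mul, Matrix.smul_mul,
      ← Matrix.mul_assoc, hB, Matrix.zero_mul, smul_zero, sub_zero]
  refine ⟨G * B + Bᵀ * G - G * (B * A) * G, ?_, ?_⟩
  · rw [IsSymm, transpose_sub, transpose_add, transpose_mul, transpose_mul, transpose_mul,
      transpose_mul G, hBA.eq, hG.eq, transpose_transpose, add_comm, Matrix.mul_assoc G]
  · have hC : G * B + Bᵀ * G - G * (B * A) * G = G * (B * 1) + Bᵀ * G - G * (B * (A * G)) := by
      simp only [Matrix.mul_one, Matrix.mul_assoc]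
    rw [hC, Matrix.mul_sub, Matrix.mul_add, hAGB, hAGB, ← Matrix.mul_assoc A Bᵀ, hABt,
      Matrix.mul_assoc, Matrix.mul_one, add_sub_cancel_right]

end Symmetrize

section Laplacian

variable {n R : Type*} [Fintype n] [DecidableEq n] {P : Matrix n n R}

theorem ones_mul_sub_diagonal_sum [Ring R] (hP : P.IsSymm) :
    𝕁 * (P - diagonal fun i => ∑ j, P i j) = 0 := by
  ext i j
  simp [mul_apply, diagonal_apply, sum_sub_distrib, hP.apply]

theorem two_mul_dotProduct_sub_diagonal_sum_mulVec [CommRing R] (hP : P.IsSymm) (x : n → R) :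
    2 * (x ⬝ᵥ (P - diagonal fun i => ∑ j, P i j) *ᵥ x) = -∑ i, ∑ j, P i j * (x i - x j) ^ 2 := by
  have hswap : ∑ i, ∑ j, P i j * x j ^ 2 = ∑ i, ∑ j, P i j * x i ^ 2 := by
    rw [sum_comm]
    exact sum_congr rfl fun i _ => sum_congr rfl fun j _ => by rw [hP.apply]
  have hlhs : x ⬝ᵥ (P - diagonal fun i => ∑ j, P i j) *ᵥ x =
      ∑ i, ∑ j, P i j * x i * x j - ∑ i, ∑ j, P i j * x i ^ 2 := by
    rw [sub_mulVec, dotProduct_sub]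
    simp only [dotProduct, mulVec_diagonal]
    simp only [mulVec, dotProduct, mul_sum, sum_mul]
    congr 1 <;> exact sum_congr rfl fun i _ => sum_congr rfl fun j _ => by ring
  have hrhs : ∑ i, ∑ j, P i j * (x i - x j) ^ 2 =
      ∑ i, ∑ j, P i j * x i ^ 2 + ∑ i, ∑ j, P i j * x j ^ 2 - 2 * ∑ i, ∑ j, P i j * x i * x j := by
    simp only [mul_sum, ← sum_add_distrib, ← sum_sub_distrib]
    exact sum_congr rfl fun i _ => sum_congr rfl fun j _ => by ring
  rw [hlhs, hrhs, hswap]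
  ring

theorem eq_of_sub_diagonal_sum_mulVec_eq_zero [CommRing R] [LinearOrder R] [IsStrictOrderedRing R]
    (hP : P.IsSymm) (hpos : ∀ i j, 0 < P i j) {x : n → R}
    (hx : (P - diagonal fun i => ∑ j, P i j) *ᵥ x = 0) (i j : n) : x i = x j := by
  have hterm_nonneg (i j : n) : 0 ≤ P i j * (x i - x j) ^ 2 := by
    have := hpos i j
    positivity
  have hsum : ∑ i, ∑ j, P i j * (x i - x j) ^ 2 = 0 := by
    simpa [hx] using (two_mul_dotProduct_sub_diagonal_sum_mulVec hP x).symm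
  have hrow := (sum_eq_zero_iff_of_nonneg fun i _ => sum_nonneg fun j _ => hterm_nonneg i j).mp
    hsum i (mem_univ i)
  have hij := (sum_eq_zero_iff_of_nonneg fun j _ => hterm_nonneg i j).mp hrow j (mem_univ j)
  rwa [mul_eq_zero, or_iff_right (hpos i j).ne', sq_eq_zero_iff, sub_eq_zero] at hij

theorem ones_mul_mul_diagonal_inv_sum [Field R] (hP : P.IsSymm) (hsum : ∀ i, ∑ j, P i j ≠ 0) :
    𝕁 * (P * diagonal fun i => (∑ j, P i j)⁻¹) = 𝕁 := by
  ext i j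
  rw [mul_apply]
  simp only [mul_diagonal, of_apply, one_mul]
  rw [← sum_mul, sum_congr rfl fun k _ => hP.apply j k, mul_inv_cancel₀ (hsum j)]

theorem isSymm_mul_diagonal_inv_sum_mul_sub [Field R] (hP : P.IsSymm)
    (hsum : ∀ i, ∑ j, P i j ≠ 0) :
    (P * (diagonal fun i => (∑ j, P i j)⁻¹) * (P - diagonal fun i => ∑ j, P i j)).IsSymm := by
  have hinv : ((diagonal fun i => (∑ j, P i j)⁻¹) * diagonal fun i => ∑ j, P i j) = 1 := by
    simp [hsum]
  rw [Matrix.mul_sub, Matrix.mul_assoc P _ (diagonal _), hinv, Matrix.mul_one]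
  refine IsSymm.sub ?_ hP
  simp [IsSymm, transpose_mul, hP.eq, Matrix.mul_assoc]

end Laplacian

theorem Pmat_isSymm (p m : ℕ) : (Pmat p m).IsSymm :=
  IsSymm.ext fun i j => by simp [Pmat, abs_sub_comm]

theorem Pmat_pos {p m : ℕ} (hp : 1 < p) (i j : Fin m) : 0 < Pmat p m i j := by
  have hp' : (1 : ℝ) < p := by exact_mod_cast hp
  exact mul_pos (sub_pos.mpr (inv_lt_one_of_one_lt₀ hp')) (zpow_pos (by linarith) _)

theorem LamDiag_pos {p m : ℕ} (hp : 1 < p) (i : Fin m) : 0 < LamDiag p m i :=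
  sum_pos (fun j _ => Pmat_pos hp i j) ⟨i, mem_univ i⟩

/-- The regular part `C` of the Green's function can be symmetrized:
there exists a symmetric matrix `C` satisfying
`(P − Λ) C = (1/(1 − p⁻¹))(P Λ⁻¹ − (1/m) 𝟙𝟙ᵀ)`. -/
theorem regular_part_symmetrizable (p : ℕ) (hp : p.Prime) (m : ℕ) (hm : 1 ≤ m) :
    ∃ C : Matrix (Fin m) (Fin m) ℝ, C.IsSymm ∧
      (Pmat p m - Matrix.diagonal (LamDiag p m)) * C =
        (1 / (1 - (p : ℝ)⁻¹)) •
          (Pmat p m * Matrix.diagonal (fun i => (LamDiag p m i)⁻¹) -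
            (1 / (m : ℝ)) • Matrix.of (fun _ _ => (1 : ℝ))) := by
  unfold LamDiag
  have hP := Pmat_isSymm p m
  have hsum (i : Fin m) : ∑ j, Pmat p m i j ≠ 0 := (LamDiag_pos hp.one_lt i).ne'
  have hA1 := ones_mul_sub_diagonal_sum hP
  have : Nonempty (Fin m) := ⟨⟨0, hm⟩⟩
  have hB : 𝕁 * (Pmat p m * diagonal (fun i => (∑ j, Pmat p m i j)⁻¹) - (1 / (m : ℝ)) • 𝕁) = 0 := by
    have hJJ : 𝕁 * ((m : ℝ)⁻¹ • 𝕁) = (𝕁 : Matrix (Fin m) (Fin m) ℝ) := by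
      simpa using ones_mul_inv_card_smul_ones (n := Fin m) (K := ℝ)
    rw [Matrix.mul_sub, ones_mul_mul_diagonal_inv_sum hP hsum, one_div, hJJ, sub_self]
  have hBA : ((Pmat p m * diagonal (fun i => (∑ j, Pmat p m i j)⁻¹) - (1 / (m : ℝ)) • 𝕁) *
      (Pmat p m - diagonal fun i => ∑ j, Pmat p m i j)).IsSymm := by
    rw [Matrix.sub_mul, Matrix.smul_mul, hA1, smul_zero, sub_zero]
    exact isSymm_mul_diagonal_inv_sum_mul_sub hP hsum
  obtain ⟨C, hC, hAC⟩ := exists_isSymm_mul_eq (hP.sub (isSymm_diagonal _)) hA1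
    (fun _ hx => eq_of_sub_diagonal_sum_mulVec_eq_zero hP (Pmat_pos hp.one_lt) hx) hB hBA
  exact ⟨(1 / (1 - (p : ℝ)⁻¹)) • C, hC.smul _, by rw [Matrix.mul_smul, hAC]⟩
end
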